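/- arXiv:1411.4861 — 8 statements merged into one kernel-verified Lean document; each statement's English description precedes it below -/
import Mathlib

section
/- (G₂ ∘ E₁) ∩ E₁ = ∅: no word labeling a direct summand of ω(x) ⊗ ω(y) with x ∈ G₂ and y ∈ E₁ lies in E₁. (Lemma 2.5(2) of the paper.) -/
/- Combinatorial model of the Lemeux–Tarrago fusion rules for a free wreath
product 𝔾 ≀* S_N⁺. Words over `I` (a type modeling `Irr 𝔾`) label the
irreducible corepresentations. -/

variable {I : Type*}

/-- The conjugate word `x̄ = (x.map bar).reverse`. -/
def conjW (bar : I → I) (x : List I) : List I := (x.map bar).reverse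

/-- `fusW bar fus x y` is the set of words `z` such that `ω(z)` is a direct
summand of `ω(x) ⊗ ω(y)`: there are `u, t, v` with `x = u ++ t`,
`y = t̄ ++ v` and either `z = u ++ v` (concatenation), or `u ≠ []`, `v ≠ []`
and `z = u.dropLast ++ [γ] ++ v.tail` for some `γ ∈ fus u.getLast v.head`
(fusion). -/
def fusW (bar : I → I) (fus : I → I → Set I) (x y : List I) : Set (List I) :=
  {z | ∃ u t v : List I, x = u ++ t ∧ y = conjW bar t ++ v ∧
    (z = u ++ v ∨ ∃ a b : I, u.getLast? = some a ∧ v.head? = some b ∧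
      ∃ γ ∈ fus a b, z = u.dropLast ++ [γ] ++ v.tail)}

/-- `A ∘ B` for sets of words. -/
def fusSet (bar : I → I) (fus : I → I → Set I) (A B : Set (List I)) :
    Set (List I) :=
  {z | ∃ x ∈ A, ∃ y ∈ B, z ∈ fusW bar fus x y}

/-- `E₁`: words starting with `e`, together with the empty word. -/
def E₁ (e : I) : Set (List I) := {x | x = [] ∨ x.head? = some e}

/-- `E₂`: words all of whose letters equal `e`. -/
def E₂ (e : I) : Set (List I) := {x | ∃ k : ℕ, x = List.replicate k e}

/-- `E₃ = E₁ \ E₂`. -/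
def E₃ (e : I) : Set (List I) := E₁ e \ E₂ e

/-- `S`: words containing at least one letter different from `e`. -/
def Sset (e : I) : Set (List I) := {x | x ∉ E₂ e}

/-- `G₁`: nonempty words starting with a letter different from `e`. -/
def G₁ (e : I) : Set (List I) := {x | x ≠ [] ∧ x.head? ≠ some e}

/-- `G₂`: nonempty words starting and ending with letters different from `e`. -/
def G₂ (e : I) : Set (List I) :=
  {x | x ≠ [] ∧ x.head? ≠ some e ∧ x.getLast? ≠ some e}

theorem stmt1 (bar : I → I) (e : I) (fus : I → I → Set I)
    (hbar : ∀ a : I, bar (bar a) = a) (hbare : bar e = e)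
    (hfus_left : ∀ β : I, fus e β = {β}) (hfus_right : ∀ β : I, fus β e = {β}) :
    fusSet bar fus (G₂ e) (E₁ e) ∩ E₁ e = ∅ := by
  rw [Set.eq_empty_iff_forall_notMem]
  rintro z ⟨⟨x, ⟨hxne, hxh, hxl⟩, y, hy, u, t, v, hxut, hytv, hz⟩, hzE⟩
  have hconj : (conjW bar t).head? = t.getLast?.map bar := by
    simp [conjW, List.head?_reverse, List.getLast?_map]
  rcases hz with hz | ⟨a, b, ha, hb, γ, hγ, hz⟩
  · rcases eq_or_ne u [] with hu | hu
    · subst hu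
      simp only [List.nil_append] at hxut hz
      subst hxut
      subst hz
      have htne : conjW bar x ≠ [] := by
        simp [conjW, hxne]
      have hyne : y ≠ [] := by
        rw [hytv]; exact fun h => htne (List.append_eq_nil_iff.mp h).1
      rcases hy with hy | hy
      · exact hyne hy
      · rw [hytv, List.head?_append_of_ne_nil _ htne, hconj] at hy
        obtain ⟨c, hc, hce⟩ := Option.map_eq_some_iff.mp hy
        have : c = e := by rw [← hbar c, hce, hbare]
        exact hxl (this ▸ hc)
    · have hzne : z ≠ [] := by
        rw [hz]; exact fun h => hu (List.append_eq_nil_iff.mp h).1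
      have hzh : z.head? = x.head? := by
        rw [hz, hxut, List.head?_append_of_ne_nil _ hu,
          List.head?_append_of_ne_nil _ hu]
      rcases hzE with h | h
      · exact hzne h
      · exact hxh (hzh ▸ h)
  · have hu : u ≠ [] := by
      intro h; rw [h] at ha; simp at ha
    have hv : v ≠ [] := by
      intro h; rw [h] at hb; simp at hb
    rcases eq_or_ne u.dropLast [] with hud | hud
    · -- u = [a]
      have hua : u = [a] := by
        have := List.dropLast_append_getLast? a ha
        rw [hud] at this; simpa using this.symm
      have hae : a ≠ e := by
        intro h
        apply hxh
        rw [hxut, List.head?_append_of_ne_nil _ hu, hua, h]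
        rfl
      have hzh : z.head? = some γ := by rw [hz, hud]; rfl
      have hzne : z ≠ [] := by intro h; rw [h] at hzh; simp at hzh
      have hγe : γ = e := by
        rcases hzE with h | h
        · exact absurd h hzne
        · rw [hzh] at h; exact Option.some_inj.mp h
      rcases eq_or_ne t [] with ht | ht
      · subst ht
        simp only [conjW, List.map_nil, List.reverse_nil, List.nil_append] at hytv
        subst hytv
        rcases hy with hy | hy
        · exact hv hy
        · rw [hb] at hy
          have hbe : b = e := Option.some_inj.mp hy
          rw [hbe, hfus_right] at hγ
          have hga : γ = a := hγ
          exact hae (hga ▸ hγe)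
      · have htne : conjW bar t ≠ [] := by simp [conjW, ht]
        have hyne : y ≠ [] := by
          rw [hytv]; exact fun h => htne (List.append_eq_nil_iff.mp h).1
        rcases hy with hy | hy
        · exact hyne hy
        · rw [hytv, List.head?_append_of_ne_nil _ htne, hconj] at hy
          obtain ⟨c, hc, hce⟩ := Option.map_eq_some_iff.mp hy
          have hcee : c = e := by rw [← hbar c, hce, hbare]
          apply hxl
          rw [hxut, List.getLast?_append_of_ne_nil _ ht]
          exact hcee ▸ hc
    · have hlen : 1 < u.length := by
        have h1 := List.length_pos_iff.mpr hud
        rw [List.length_dropLast] at h1; omega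
      have hzh : z.head? = x.head? := by
        rw [hz, hxut, List.head?_append_of_ne_nil _ hu, List.append_assoc,
          List.head?_append_of_ne_nil _ hud, List.head?_dropLast, if_pos hlen]
      have hzne : z ≠ [] := by
        rw [hz]
        intro h
        exact hud (List.append_eq_nil_iff.mp ((List.append_assoc _ _ _) ▸ h)).1
      rcases hzE with h | h
      · exact hzne h
      · exact hxh (hzh ▸ h)
end

section
/- Let α ∈ I with α ≠ e, and for t ∈ {1,2,3} set x_t = α :: e^{2t−1} (so x₁ = [α,e], x₂ = [α,e,e,e], x₃ = [α,e,e,e,e,e]). Then for all s, t ∈ {1,2,3} with s ≠ t one has ({x_t} ∘ G₁) ∩ ({x_s} ∘ G₁) = ∅. (Lemma 2.5(3) of the paper.) -/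
/- Combinatorial model of the Lemeux–Tarrago fusion rules for a free wreath
product 𝔾 ≀* S_N⁺. Words over `I` (a type modeling `Irr 𝔾`) label the
irreducible corepresentations. -/

variable {I : Type*}

lemma repl_cancel (e : I) : ∀ (m m' : ℕ) (y y' : List I),
    y.head? ≠ some e → y'.head? ≠ some e →
    List.replicate m e ++ y = List.replicate m' e ++ y' → m = m'
  | 0, 0, _, _, _, _, _ => rfl
  | 0, m' + 1, y, y', hy, _, h => by
    rw [List.replicate_succ] at h
    simp only [List.replicate_zero, List.nil_append] at h
    exact absurd (by rw [h]; rfl) hy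
  | m + 1, 0, y, y', _, hy', h => by
    rw [List.replicate_succ] at h
    simp only [List.replicate_zero, List.nil_append] at h
    exact absurd (by rw [← h]; rfl) hy'
  | m + 1, m' + 1, y, y', hy, hy', h => by
    rw [List.replicate_succ, List.replicate_succ] at h
    simp only [List.cons_append, List.cons.injEq] at h
    exact congrArg Nat.succ (repl_cancel e m m' y y' hy hy' h.2)

lemma char_mem (bar : I → I) (e : I) (fus : I → I → Set I) (hbare : bar e = e)
    (hfus_left : ∀ β : I, fus e β = {β}) (α : I) {k : ℕ} (hk : 1 ≤ k)
    {z : List I}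
    (hz : z ∈ fusSet bar fus {α :: List.replicate k e} (G₁ e)) :
    ∃ m y, (m = k ∨ m = k - 1) ∧ y ≠ [] ∧ y.head? ≠ some e ∧
      z = α :: (List.replicate m e ++ y) := by
  obtain ⟨x, hx, y, hy, u, t, v, hxu, hyv, hcase⟩ := hz
  rw [Set.mem_singleton_iff] at hx
  subst hx
  obtain ⟨hyne, hyhd⟩ := hy
  have hxrep : α :: List.replicate k e = (α :: List.replicate (k - 1) e) ++ [e] := by
    conv_lhs => rw [show k = (k - 1) + 1 by omega, List.replicate_succ',
      ← List.cons_append]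
  have ht : t = [] := by
    by_contra ht
    apply hyhd
    rw [hyv]
    have hconj : conjW bar t ≠ [] := by simp [conjW, ht]
    rw [List.head?_append_of_ne_nil _ hconj]
    have h2 : (conjW bar t).head? = (t.getLast?).map bar := by
      rw [conjW, List.head?_reverse, List.getLast?_map]
    have h3 : t.getLast? = some e := by
      have h4 := congrArg List.getLast? hxu
      rw [List.getLast?_append_of_ne_nil _ ht] at h4
      rw [← h4, hxrep, List.getLast?_concat]
    rw [h2, h3, Option.map_some, hbare]
  subst ht
  simp only [List.append_nil] at hxu
  simp only [conjW, List.map_nil, List.reverse_nil, List.nil_append] at hyv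
  subst hxu hyv
  rcases hcase with h | ⟨a, b, ha, hb, γ, hγ, hzeq⟩
  · exact ⟨k, y, Or.inl rfl, hyne, hyhd, by simpa using h⟩
  · have ha' : a = e := by
      rw [hxrep, List.getLast?_concat] at ha
      exact (Option.some_injective _ ha).symm
    subst ha'
    rw [hfus_left] at hγ
    rw [Set.mem_singleton_iff] at hγ
    subst hγ
    refine ⟨k - 1, y, Or.inr rfl, hyne, hyhd, ?_⟩
    rw [hzeq, hxrep, List.dropLast_concat]
    have hv : γ :: y.tail = y := List.cons_head?_tail hb
    conv_rhs => rw [← hv]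
    simp

theorem stmt2 (bar : I → I) (e : I) (fus : I → I → Set I)
    (hbar : ∀ a : I, bar (bar a) = a) (hbare : bar e = e)
    (hfus_left : ∀ β : I, fus e β = {β}) (hfus_right : ∀ β : I, fus β e = {β})
    (α : I) (hα : α ≠ e) :
    ∀ s ∈ ({1, 2, 3} : Set ℕ), ∀ t ∈ ({1, 2, 3} : Set ℕ), s ≠ t →
      fusSet bar fus {α :: List.replicate (2 * s - 1) e} (G₁ e) ∩
        fusSet bar fus {α :: List.replicate (2 * t - 1) e} (G₁ e) = ∅ := by
  intro s hs t ht hst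
  rw [Set.eq_empty_iff_forall_notMem]
  rintro z ⟨h1, h2⟩
  have hs1 : 1 ≤ s := by rcases hs with rfl | rfl | rfl <;> norm_num
  have ht1 : 1 ≤ t := by rcases ht with rfl | rfl | rfl <;> norm_num
  obtain ⟨m, y, hm, hyne, hyhd, hz1⟩ :=
    char_mem bar e fus hbare hfus_left α (by omega) h1
  obtain ⟨m', y', hm', hyne', hyhd', hz2⟩ :=
    char_mem bar e fus hbare hfus_left α (by omega) h2
  rw [hz1] at hz2
  simp only [List.cons.injEq] at hz2
  have := repl_cancel e m m' y y' hyhd hyhd' hz2.2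
  omega
end

section
/- Let α ∈ I with α ≠ e, and for t ∈ {1,2,3} set x_t = α :: e^{2t−1} (so that x̄_t = e^{2t−1} ++ [bar α]). Then for each t ∈ {1,2,3} one has ({x_t} ∘ G₂) ∘ {x̄_t} ⊆ G₂; in particular ⋃_{t=1}^{3} ({x_t} ∘ G₂) ∘ {x̄_t} ⊆ G₂. (Lemma 2.5(4) of the paper.) -/
/- Combinatorial model of the Lemeux–Tarrago fusion rules for a free wreath
product 𝔾 ≀* S_N⁺. Words over `I` (a type modeling `Irr 𝔾`) label the
irreducible corepresentations. -/

variable {I : Type*}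

lemma conjW_head? (bar : I → I) (t : List I) :
    (conjW bar t).head? = t.getLast?.map bar := by
  rw [conjW, ← List.getLast?_eq_head?_reverse, List.getLast?_map]

lemma conjW_ne_nil (bar : I → I) {t : List I} (ht : t ≠ []) :
    conjW bar t ≠ [] := by
  simp [conjW, ht]

/-- Step 1: `fusW (α :: e^m) w ⊆ G₂` for `w ∈ G₂`, `m ≥ 1`. -/
lemma step1 (bar : I → I) (e : I) (fus : I → I → Set I)
    (hbare : bar e = e) (hfus_left : ∀ β : I, fus e β = {β})
    (α : I) (hα : α ≠ e) (m : ℕ) (hm : 1 ≤ m)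
    {w : List I} (hw : w ∈ G₂ e) :
    fusW bar fus (α :: List.replicate m e) w ⊆ G₂ e := by
  obtain ⟨hw1, hw2, hw3⟩ := hw
  obtain ⟨m', rfl⟩ := Nat.exists_eq_add_of_le hm
  rintro z ⟨u, t, v, hx, hy, hor⟩
  have hxform : α :: List.replicate (1 + m') e
      = (α :: List.replicate m' e) ++ [e] := by
    rw [Nat.add_comm, List.replicate_succ']; simp
  have hxlast : (α :: List.replicate (1 + m') e).getLast? = some e := by
    rw [hxform, List.getLast?_concat]
  -- t must be empty
  have ht : t = [] := by
    by_contra ht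
    have h1 : t.getLast? = some e := by
      rw [hx] at hxlast
      rwa [List.getLast?_append_of_ne_nil _ ht] at hxlast
    have h2 : w.head? = some e := by
      rw [hy, List.head?_append_of_ne_nil _ (conjW_ne_nil bar ht),
        conjW_head?, h1]
      simp [hbare]
    exact hw2 h2
  subst ht
  rw [List.append_nil] at hx
  subst hx
  have hv : w = v := by simpa [conjW] using hy
  subst hv
  rcases hor with hz | ⟨a, b, ha, hb, γ, hγ, hz⟩
  · subst hz
    refine ⟨by simp, ?_, ?_⟩
    · simp [hα]
    · rwa [List.getLast?_append_of_ne_nil _ hw1]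
  · -- fusion case
    have ha' : a = e := by
      rw [hxlast] at ha; exact Option.some.inj ha.symm
    have hγ' : γ = b := by
      rw [ha', hfus_left] at hγ; exact hγ
    have hbv : b :: w.tail = w := List.cons_head?_tail hb
    have hdl : (α :: List.replicate (1 + m') e).dropLast
        = α :: List.replicate m' e := by
      rw [hxform, List.dropLast_concat]
    have hzw : z = (α :: List.replicate m' e) ++ w := by
      rw [hz, hγ', hdl, List.append_assoc, ← hbv]; rfl
    rw [hzw]
    refine ⟨by simp [hw1], by simp [hα], ?_⟩
    rwa [List.getLast?_append_of_ne_nil _ hw1]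

/-- Step 2: `fusW z (e^m ++ [bar α]) ⊆ G₂` for `z ∈ G₂`, `m ≥ 1`. -/
lemma step2 (bar : I → I) (e : I) (fus : I → I → Set I)
    (hbar : ∀ a : I, bar (bar a) = a) (hbare : bar e = e)
    (hfus_right : ∀ β : I, fus β e = {β})
    (α : I) (hα : α ≠ e) (m : ℕ) (hm : 1 ≤ m)
    {z : List I} (hz : z ∈ G₂ e) :
    fusW bar fus z (List.replicate m e ++ [bar α]) ⊆ G₂ e := by
  obtain ⟨hz1, hz2, hz3⟩ := hz
  obtain ⟨m', rfl⟩ := Nat.exists_eq_add_of_le hm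
  have hbα : bar α ≠ e := fun h => hα (by rw [← hbar α, h, hbare])
  rintro z' ⟨u, t, v, hx, hy, hor⟩
  -- t must be empty
  have ht : t = [] := by
    by_contra ht
    have h1 : t.getLast? = z.getLast? := by
      rw [hx, List.getLast?_append_of_ne_nil _ ht]
    have h2 : (List.replicate (1 + m') e ++ [bar α]).head? = some e := by
      rw [Nat.add_comm, List.replicate_succ]; rfl
    rw [hy, List.head?_append_of_ne_nil _ (conjW_ne_nil bar ht),
      conjW_head?, h1] at h2
    obtain ⟨c, hc, hc2⟩ := Option.map_eq_some_iff.mp h2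
    apply hz3
    rw [hc]
    have : c = e := by rw [← hbar c, hc2, hbare]
    rw [this]
  subst ht
  rw [List.append_nil] at hx
  subst hx
  have hv : List.replicate (1 + m') e ++ [bar α] = v := by
    simpa [conjW] using hy
  rcases hor with hz' | ⟨a, b, ha, hb, γ, hγ, hz'⟩
  · subst hz'
    refine ⟨by simp [hz1], ?_, ?_⟩
    · rwa [List.head?_append_of_ne_nil _ hz1]
    · rw [List.getLast?_append_of_ne_nil _ (by rw [← hv]; simp)]
      rw [← hv, List.getLast?_concat]
      simp [hbα]
  · -- fusion case
    have hbe : b = e := by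
      rw [← hv, Nat.add_comm, List.replicate_succ] at hb
      simpa using hb.symm
    have hγ' : γ = a := by
      rw [hbe, hfus_right] at hγ; exact hγ
    have hza : z.dropLast ++ [a] = z := List.dropLast_append_getLast? a ha
    have hvt : v.tail = List.replicate m' e ++ [bar α] := by
      rw [← hv, Nat.add_comm, List.replicate_succ]; rfl
    rw [hz', hγ', hza, hvt]
    refine ⟨by simp [hz1], ?_, ?_⟩
    · rwa [List.head?_append_of_ne_nil _ hz1]
    · rw [List.getLast?_append_of_ne_nil _ (by simp), List.getLast?_concat]
      simp [hbα]

lemma main_lemma (bar : I → I) (e : I) (fus : I → I → Set I)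
    (hbar : ∀ a : I, bar (bar a) = a) (hbare : bar e = e)
    (hfus_left : ∀ β : I, fus e β = {β}) (hfus_right : ∀ β : I, fus β e = {β})
    (α : I) (hα : α ≠ e) (m : ℕ) (hm : 1 ≤ m) :
    fusSet bar fus
      (fusSet bar fus {α :: List.replicate m e} (G₂ e))
      {conjW bar (α :: List.replicate m e)} ⊆ G₂ e := by
  rintro z' ⟨z, ⟨x, hx, w, hw, hzf⟩, y, hy, hz'f⟩
  rw [Set.mem_singleton_iff] at hx hy
  subst hx
  have hz : z ∈ G₂ e := step1 bar e fus hbare hfus_left α hα m hm hw hzf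
  have hconj : conjW bar (α :: List.replicate m e)
      = List.replicate m e ++ [bar α] := by
    simp [conjW, List.map_replicate, hbare]
  rw [hy, hconj] at hz'f
  exact step2 bar e fus hbar hbare hfus_right α hα m hm hz hz'f

theorem stmt3 (bar : I → I) (e : I) (fus : I → I → Set I)
    (hbar : ∀ a : I, bar (bar a) = a) (hbare : bar e = e)
    (hfus_left : ∀ β : I, fus e β = {β}) (hfus_right : ∀ β : I, fus β e = {β})
    (α : I) (hα : α ≠ e) :
    ∀ t ∈ ({1, 2, 3} : Set ℕ),
      fusSet bar fus
        (fusSet bar fus {α :: List.replicate (2 * t - 1) e} (G₂ e))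
        {conjW bar (α :: List.replicate (2 * t - 1) e)} ⊆ G₂ e := by
  intro t ht
  have hm : 1 ≤ 2 * t - 1 := by
    rcases ht with rfl | rfl | rfl <;> norm_num
  exact main_lemma bar e fus hbar hbare hfus_left hfus_right α hα _ hm
end

section
/- Assume there exists α ∈ I with α ≠ e (i.e. |Irr(𝔾)| ≥ 2). Then for every finite subset G ⊆ S there exists x ∈ S such that ({x} ∘ G) ∘ {x̄} ⊆ G₂. (Lemma 2.5(5) of the paper; one may take x = α :: e^k with k = 1 + max{length y : y ∈ G}.) -/
/- Combinatorial model of the Lemeux–Tarrago fusion rules for a free wreath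
product 𝔾 ≀* S_N⁺. Words over `I` (a type modeling `Irr 𝔾`) label the
irreducible corepresentations. -/

variable {I : Type*}

/-! Take `x = α :: e^k` with `k` exceeding the length of every word of `G`, so that `x̄ = e^k ++ [ᾱ]`.
A word `y ∈ G` can only cancel or fuse against the tail `e^k` of `x`, and fusing with `e` changes
nothing; hence every summand of `x ⊗ y` starts with `α` and still carries a letter `≠ e` of `y`
among its last `k` letters, so it does not end in `e^k`. In a product of such a word with `x̄` the
block `e^k` is therefore never cancelled completely, and every summand starts with `α` and ends
with `ᾱ`. -/

section FusionRules

variable {bar : I → I} {e : I} {fus : I → I → Set I}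

lemma mem_Sset_iff {x : List I} : x ∈ Sset e ↔ ∃ c ∈ x, c ≠ e := by
  simp only [Sset, E₂, List.eq_replicate_iff]
  constructor
  · intro h
    by_contra! hx
    exact h ⟨x.length, rfl, hx⟩
  · rintro ⟨c, hc, hce⟩ ⟨k, -, hx⟩
    exact hce (hx c hc)

lemma cons_mem_G₁ {α : I} (hα : α ≠ e) (l : List I) : α :: l ∈ G₁ e := by
  simp [G₁, hα]

lemma mem_G₁_of_append_replicate {u : List I} {n : ℕ}
    (h : u ++ List.replicate n e ∈ G₁ e) : u ∈ G₁ e := by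
  cases u with
  | nil => cases n <;> simp [G₁, List.replicate_succ] at h ⊢
  | cons a u => simpa [G₁] using h

lemma append_concat_mem_G₂ {u : List I} {b : I} (hu : u ∈ G₁ e) (hb : b ≠ e)
    (w : List I) : u ++ w ++ [b] ∈ G₂ e := by
  refine ⟨by simp, ?_, by simpa using hb⟩
  rw [List.append_assoc, List.head?_append_of_ne_nil _ hu.1]
  exact hu.2

lemma not_replicate_suffix {v z : List I} {k : ℕ} (hvz : v <:+ z)
    (hvk : v.length < k) (hv : v ∈ Sset e) : ¬ List.replicate k e <:+ z := by
  intro hkz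
  obtain ⟨c, hc, hce⟩ := mem_Sset_iff.1 hv
  rcases List.suffix_or_suffix_of_suffix hvz hkz with h | h
  · exact hce (List.eq_of_mem_replicate (h.subset hc))
  · simpa using h.length_le.trans_lt hvk

lemma conjW_replicate (hbare : bar e = e) (n : ℕ) :
    conjW bar (List.replicate n e) = List.replicate n e := by
  simp [conjW, hbare]

lemma conjW_conjW (hbar : ∀ a : I, bar (bar a) = a) (l : List I) :
    conjW bar (conjW bar l) = l := by
  simp [conjW, Function.comp_def, hbar]

lemma eq_replicate_of_conjW_eq (hbar : ∀ a : I, bar (bar a) = a) (hbare : bar e = e)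
    {t : List I} {n : ℕ} (h : conjW bar t = List.replicate n e) :
    t = List.replicate n e := by
  rw [← conjW_conjW hbar t, h, conjW_replicate hbare]

lemma conjW_cons_replicate (hbare : bar e = e) (α : I) (k : ℕ) :
    conjW bar (α :: List.replicate k e) = List.replicate k e ++ [bar α] := by
  simp [conjW, hbare]

lemma cons_tail_eq_of_mem_fus_e (hfus_left : ∀ β : I, fus e β = {β}) {v : List I}
    {b γ : I} (hv : v.head? = some b) (hγ : γ ∈ fus e b) : γ :: v.tail = v := by
  rw [hfus_left, Set.mem_singleton_iff] at hγ
  obtain ⟨v, rfl⟩ := List.head?_eq_some_iff.1 hv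
  simp [hγ]

lemma dropLast_concat_eq_of_mem_fus_e (hfus_right : ∀ β : I, fus β e = {β}) {u : List I}
    {a γ : I} (hu : u.getLast? = some a) (hγ : γ ∈ fus a e) : u.dropLast ++ [γ] = u := by
  rw [hfus_right, Set.mem_singleton_iff] at hγ
  obtain ⟨u, rfl⟩ := List.getLast?_eq_some_iff.1 hu
  simp [hγ]

lemma fusW_cons_replicate_mem (hbare : bar e = e) (hfus_left : ∀ β : I, fus e β = {β})
    {α : I} (hα : α ≠ e) {k : ℕ} {y z : List I} (hy : y ∈ Sset e) (hyk : y.length < k)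
    (hz : z ∈ fusW bar fus (α :: List.replicate k e) y) :
    z ∈ G₁ e ∧ ¬ List.replicate k e <:+ z := by
  obtain ⟨u, t, v, hx, rfl, hz⟩ := hz
  have hlen : t.length + v.length < k := by simpa [conjW] using hyk
  -- `t` is shorter than `k`, so `u` ends with `e`
  have hsplit : α :: List.replicate k e =
      (α :: List.replicate (k - t.length - 1) e ++ [e]) ++ List.replicate t.length e := by
    simp only [List.cons_append, ← List.replicate_succ', List.replicate_append_replicate]
    congr 2
    omega
  obtain ⟨hu, ht⟩ := List.append_inj' (hx.symm.trans hsplit) (by simp)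
  rw [ht, conjW_replicate hbare] at hy
  have hv : v ∈ Sset e := by
    obtain ⟨c, hc, hce⟩ := mem_Sset_iff.1 hy
    refine mem_Sset_iff.2 ⟨c, ?_, hce⟩
    exact (List.mem_append.1 hc).resolve_left fun h => hce (List.eq_of_mem_replicate h)
  obtain ⟨s, rfl⟩ : ∃ s, z = α :: s ++ v := by
    rcases hz with rfl | ⟨a, b, ha, hb, γ, hγ, rfl⟩
    · exact ⟨_, by rw [hu]; rfl⟩
    · rw [hu, List.getLast?_concat, Option.some.injEq] at ha
      subst ha
      refine ⟨List.replicate (k - t.length - 1) e, ?_⟩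
      rw [List.append_assoc, List.singleton_append, cons_tail_eq_of_mem_fus_e hfus_left hb hγ,
        hu, List.dropLast_concat]
  exact ⟨cons_mem_G₁ hα _, not_replicate_suffix (List.suffix_append _ _) (by omega) hv⟩

lemma fusW_replicate_concat_subset_G₂ (hbar : ∀ a : I, bar (bar a) = a) (hbare : bar e = e)
    (hfus_right : ∀ β : I, fus β e = {β}) {k : ℕ} {b : I} (hb : b ≠ e) {z : List I}
    (hz : z ∈ G₁ e) (hzk : ¬ List.replicate k e <:+ z) :
    fusW bar fus z (List.replicate k e ++ [b]) ⊆ G₂ e := by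
  rintro z' ⟨u, t, v, rfl, hy, hz'⟩
  obtain rfl | hv := eq_or_ne v []
  · have ht : t = bar b :: List.replicate k e := by
      rw [← conjW_conjW hbar t, ← List.append_nil (conjW bar t), ← hy]
      simp [conjW, hbare]
    exact absurd ((List.suffix_cons _ _).trans (List.suffix_append _ _)) (ht ▸ hzk)
  have htk : t.length ≤ k := by
    have hlen := congrArg List.length hy
    simp only [conjW, List.length_append, List.length_reverse, List.length_map,
      List.length_replicate, List.length_singleton] at hlen
    have := List.length_pos_iff.2 hv
    omega
  have hsplit : List.replicate k e ++ [b] =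
      List.replicate t.length e ++ (List.replicate (k - t.length) e ++ [b]) := by
    rw [← List.append_assoc, List.replicate_append_replicate]
    congr 2
    omega
  obtain ⟨ht, rfl⟩ := List.append_inj (hy.symm.trans hsplit) (by simp [conjW])
  rw [eq_replicate_of_conjW_eq hbar hbare ht] at hz hzk
  have hu : u ∈ G₁ e := mem_G₁_of_append_replicate hz
  rcases hz' with rfl | ⟨a, c, ha, hc, γ, hγ, rfl⟩
  · rw [← List.append_assoc]
    exact append_concat_mem_G₂ hu hb _
  · obtain ⟨p, hp⟩ : ∃ p, k - t.length = p + 1 := by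
      refine Nat.exists_eq_add_one.2 (Nat.pos_of_ne_zero fun h0 => hzk ?_)
      rw [show t.length = k by omega]
      exact List.suffix_append _ _
    rw [hp, List.replicate_succ, List.cons_append, List.head?_cons, Option.some.injEq] at hc
    subst hc
    rw [dropLast_concat_eq_of_mem_fus_e hfus_right ha hγ, hp, List.replicate_succ,
      List.cons_append, List.tail_cons, ← List.append_assoc]
    exact append_concat_mem_G₂ hu hb _

end FusionRules

theorem stmt4 (bar : I → I) (e : I) (fus : I → I → Set I)
    (hbar : ∀ a : I, bar (bar a) = a) (hbare : bar e = e)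
    (hfus_left : ∀ β : I, fus e β = {β}) (hfus_right : ∀ β : I, fus β e = {β})
    (hex : ∃ α : I, α ≠ e) :
    ∀ G : Finset (List I), ↑G ⊆ Sset e →
      ∃ x ∈ Sset e,
        fusSet bar fus (fusSet bar fus {x} (↑G : Set (List I)))
          {conjW bar x} ⊆ G₂ e := by
  intro G hG
  obtain ⟨α, hα⟩ := hex
  have hbarα : bar α ≠ e := fun h => hα (by rw [← hbar α, h, hbare])
  set k := G.sup List.length + 1
  refine ⟨α :: List.replicate k e, mem_Sset_iff.2 ⟨α, List.mem_cons_self, hα⟩, ?_⟩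
  rintro z' ⟨z, ⟨_, rfl, y, hy, hz⟩, _, rfl, hz'⟩
  obtain ⟨hzG, hzk⟩ := fusW_cons_replicate_mem hbare hfus_left hα (hG hy)
    (Nat.lt_succ_of_le (Finset.le_sup hy)) hz
  rw [conjW_cons_replicate hbare] at hz'
  exact fusW_replicate_concat_subset_G₂ hbar hbare hfus_right hbarα hzG hzk hz'
end

section
/- Let α ∈ I with α ≠ e. Then ({[α]} ∘ E₃) ∘ {[bar α]} ⊆ G₁: every word labeling a direct summand of ω((α)) ⊗ ω(t) ⊗ ω((ᾱ)) with t ∈ E₃ begins with a letter different from e. (Lemma 3.4(1) of the paper.) -/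
/- Combinatorial model of the Lemeux–Tarrago fusion rules for a free wreath
product 𝔾 ≀* S_N⁺. Words over `I` (a type modeling `Irr 𝔾`) label the
irreducible corepresentations. -/

variable {I : Type*}

theorem stmt5 (bar : I → I) (e : I) (fus : I → I → Set I)
    (hbar : ∀ a : I, bar (bar a) = a) (hbare : bar e = e)
    (hfus_left : ∀ β : I, fus e β = {β}) (hfus_right : ∀ β : I, fus β e = {β})
    (α : I) (hα : α ≠ e) :
    fusSet bar fus (fusSet bar fus {[α]} (E₃ e)) {[bar α]} ⊆ G₁ e := by
  rintro z' ⟨z, hz, y', hy', hzz⟩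
  simp only [Set.mem_singleton_iff] at hy'
  subst hy'
  obtain ⟨w, hw, rfl⟩ : ∃ w, w ≠ [] ∧ z = α :: w := by
    obtain ⟨x, hx, y, hy, u, t, v, hut, hyv, hcase⟩ := hz
    simp only [Set.mem_singleton_iff] at hx
    subst hx
    obtain ⟨hy1, hy2⟩ := hy
    rcases u with _ | ⟨a, u⟩
    · simp only [List.nil_append] at hut
      subst hut
      simp only [conjW, List.map_cons, List.map_nil, List.reverse_cons,
        List.reverse_nil, List.nil_append, List.cons_append] at hyv
      subst hyv
      rcases hy1 with h | h
      · exact absurd h (List.cons_ne_nil _ _)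
      · simp only [List.head?_cons, Option.some.injEq] at h
        exact absurd (by rw [← hbar α, h, hbare]) hα
    · rw [List.cons_append] at hut
      injection hut with h1 h2
      subst h1
      obtain ⟨rfl, rfl⟩ := List.append_eq_nil_iff.mp h2.symm
      simp only [conjW, List.map_nil, List.reverse_nil, List.nil_append] at hyv
      subst hyv
      have hvne : y ≠ [] := by
        rintro rfl
        exact hy2 ⟨0, rfl⟩
      rcases hcase with h | ⟨a', b, ha', hb, γ, hγ, hz⟩
      · exact ⟨y, hvne, by simpa using h⟩
      · simp only [List.getLast?_singleton, Option.some.injEq] at ha'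
        subst ha'
        have hve : y.head? = some e := by
          rcases hy1 with h | h
          · exact absurd h hvne
          · exact h
        rw [hve, Option.some.injEq] at hb
        subst hb
        rw [hfus_right, Set.mem_singleton_iff] at hγ
        subst hγ
        refine ⟨y.tail, ?_, by simpa using hz⟩
        intro htail
        apply hy2
        rcases y with _ | ⟨c, y⟩
        · exact absurd rfl hvne
        · simp only [List.head?_cons, Option.some.injEq] at hve
          simp only [List.tail_cons] at htail
          exact ⟨1, by rw [hve, htail]; rfl⟩
  rcases w with _ | ⟨b, w⟩
  · exact absurd rfl hw
  obtain ⟨u, t, v, hut, hv, hcase⟩ := hzz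
  rcases t with _ | ⟨c, t⟩
  · simp only [conjW, List.map_nil, List.reverse_nil, List.nil_append] at hv
    subst hv
    rw [List.append_nil] at hut
    subst hut
    rcases hcase with h | ⟨a', b', ha', hb', γ, hγ, hz⟩
    · subst h
      constructor
      · simp
      · simp [hα]
    · subst hz
      constructor
      · simp
      · simp only [List.dropLast_cons₂, List.cons_append, List.head?_cons,
          Option.some.injEq, ne_eq]
        simp [hα]
  · have hlen := congrArg List.length hv
    simp only [conjW, List.length_cons, List.length_append, List.length_reverse,
      List.length_map, List.length_nil] at hlen
    have ht : t = [] := List.length_eq_zero_iff.mp (by omega)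
    have hvnil : v = [] := List.length_eq_zero_iff.mp (by omega)
    subst ht; subst hvnil
    simp only [conjW, List.map_cons, List.map_nil, List.reverse_cons,
      List.reverse_nil, List.nil_append, List.append_nil,
      List.cons.injEq] at hv
    have hc : c = α := by rw [← hbar c, ← hv.1, hbar]
    subst hc
    rcases hcase with h | ⟨a', b', ha', hb', γ, hγ, hz⟩
    · rw [List.append_nil] at h
      subst h
      rcases z' with _ | ⟨d, z'⟩
      · simp at hut
      · rw [List.cons_append] at hut
        injection hut with h1 h2
        subst h1
        exact ⟨List.cons_ne_nil _ _, by simp [hα]⟩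
    · simp at hb'
end

section
/- For every integer i ≥ 1, every β ∈ I with β ≠ e, and every word w ∈ List I: fusW e^i (β :: w) = {e^i ++ (β :: w), e^{i−1} ++ (β :: w)}. (Combinatorial form of the identity ω(1^i) ⊗ ω(β,…) = ω(1^i, β,…) ⊕ ω(1^{i−1}, β,…) from the proof of Lemma 3.4(2) of the paper.) -/
/- Combinatorial model of the Lemeux–Tarrago fusion rules for a free wreath
product 𝔾 ≀* S_N⁺. Words over `I` (a type modeling `Irr 𝔾`) label the
irreducible corepresentations. -/

variable {I : Type*}

/- If `ω(x) ⊗ ω(y)` could cancel a nonempty word `t`, the first letter of `y` would be the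
conjugate of the last letter of `x`; for `x = e^i` and `y = β :: w` that would force
`β = bar e = e`. So only `t = []` contributes: the concatenation `e^i β w`, and the fusion of
the last `e` with `β`, which is `e^(i-1) β w` since `fus e β = {β}`. -/

theorem conjW_concat (bar : I → I) (t : List I) (c : I) :
    conjW bar (t ++ [c]) = bar c :: conjW bar t := by
  simp [conjW]

theorem fusW_eq_of_head_ne_bar_getLast (bar : I → I) (fus : I → I → Set I) (x y : List I)
    (hxy : ∀ a, x.getLast? = some a → y.head? ≠ some (bar a)) :
    fusW bar fus x y = {z | z = x ++ y ∨ ∃ a b : I, x.getLast? = some a ∧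
      y.head? = some b ∧ ∃ γ ∈ fus a b, z = x.dropLast ++ [γ] ++ y.tail} := by
  ext z
  constructor
  · rintro ⟨u, t, v, rfl, rfl, hz⟩
    obtain rfl | ⟨t, c, rfl⟩ := t.eq_nil_or_concat
    · simpa [conjW] using hz
    · rw [List.concat_eq_append] at hxy
      refine absurd ?_ (hxy c ?_)
      · simp [conjW_concat]
      · simp [← List.append_assoc]
  · intro hz
    exact ⟨x, [], y, by simp, by simp [conjW], hz⟩

theorem stmt9_general (bar : I → I) (e : I) (fus : I → I → Set I)
    (hbare : bar e = e)
    (hfus_left : ∀ β : I, fus e β = {β}) :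
    ∀ i : ℕ, 1 ≤ i → ∀ β : I, β ≠ e → ∀ w : List I,
      fusW bar fus (List.replicate i e) (β :: w) =
        {List.replicate i e ++ β :: w, List.replicate (i - 1) e ++ β :: w} := by
  intro i hi β hβ w
  obtain ⟨n, rfl⟩ := Nat.exists_eq_add_of_le' hi
  have hlast : (List.replicate (n + 1) e).getLast? = some e := by
    rw [List.replicate_succ', List.getLast?_concat]
  have hdrop : (List.replicate (n + 1) e).dropLast = List.replicate n e := by
    rw [List.replicate_succ', List.dropLast_concat]
  rw [fusW_eq_of_head_ne_bar_getLast]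
  · ext z
    simp [hlast, hdrop, hfus_left]
  · intro a ha
    obtain rfl : a = e := by simpa [hlast] using ha.symm
    simpa [hbare] using hβ

theorem stmt9 (bar : I → I) (e : I) (fus : I → I → Set I)
    (hbar : ∀ a : I, bar (bar a) = a) (hbare : bar e = e)
    (hfus_left : ∀ β : I, fus e β = {β}) (hfus_right : ∀ β : I, fus β e = {β}) :
    ∀ i : ℕ, 1 ≤ i → ∀ β : I, β ≠ e → ∀ w : List I,
      fusW bar fus (List.replicate i e) (β :: w) =
        {List.replicate i e ++ β :: w, List.replicate (i - 1) e ++ β :: w} :=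
  stmt9_general bar e fus hbare hfus_left
end

section
/- Let α ∈ I with α ≠ e and let y ∈ G₂. Then ({[α, e]} ∘ {y}) ∘ {[e, bar α]} = {(α :: e :: y) ++ [e, bar α], (α :: e :: y) ++ [bar α], (α :: y) ++ [e, bar α], (α :: y) ++ [bar α]}; in particular every element of this set begins with α and ends with bar α, hence lies in G₂. (Note [α, e]‾ = [e, bar α]; this is the displayed four-term decomposition of ω(x₁) ⊗ ω(β,…,β') ⊗ ω(x̄₁) in the proof of Lemma 2.5(4) of the paper.) -/
/- Combinatorial model of the Lemeux–Tarrago fusion rules for a free wreath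
product 𝔾 ≀* S_N⁺. Words over `I` (a type modeling `Irr 𝔾`) label the
irreducible corepresentations. -/

variable {I : Type*}

lemma helper_fusW1 (bar : I → I) (e : I) (fus : I → I → Set I)
    (hbar : ∀ a : I, bar (bar a) = a) (hbare : bar e = e)
    (hfus_left : ∀ β : I, fus e β = {β})
    (α : I) (yh : I) (yt : List I) (hyh : yh ≠ e) :
    fusW bar fus [α, e] (yh :: yt) = {α :: e :: yh :: yt, α :: yh :: yt} := by
  ext z
  constructor
  · rintro ⟨u, t, v, h1, h2, h3⟩
    rcases u with _ | ⟨a, _ | ⟨b, _ | ⟨c, u⟩⟩⟩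
    · simp only [List.nil_append] at h1
      subst h1
      simp [conjW, hbare] at h2
      exact absurd h2.1 hyh
    · simp only [List.cons_append, List.cons.injEq] at h1
      obtain ⟨rfl, h1⟩ := h1
      subst h1
      simp [conjW, hbare] at h2
      exact absurd h2.1 hyh
    · simp only [List.cons_append, List.cons.injEq] at h1
      obtain ⟨rfl, rfl, h1⟩ := h1
      have ht : t = [] := by
        cases t with
        | nil => rfl
        | cons c t => simp at h1
      subst ht
      simp [conjW] at h2
      subst h2
      rcases h3 with rfl | ⟨a, b, ha, hb, γ, hγ, rfl⟩
      · left; rfl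
      · have ha' : a = e := by simpa using ha.symm
        have hb' : b = yh := by simpa using hb.symm
        subst ha'; subst hb'
        rw [hfus_left] at hγ
        simp only [Set.mem_singleton_iff] at hγ
        subst hγ
        right; simp
    · simp at h1
  · rintro (rfl | rfl)
    · exact ⟨[α, e], [], yh :: yt, by simp, by simp [conjW], Or.inl rfl⟩
    · refine ⟨[α, e], [], yh :: yt, by simp, by simp [conjW],
        Or.inr ⟨e, yh, by simp [List.getLast?], rfl, yh, ?_, by simp⟩⟩
      rw [hfus_left]; rfl

lemma helper_fusW2 (bar : I → I) (e : I) (fus : I → I → Set I)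
    (hbar : ∀ a : I, bar (bar a) = a) (hbare : bar e = e)
    (hfus_right : ∀ β : I, fus β e = {β})
    (α : I) (l : List I) (c : I) (hc : c ≠ e) :
    fusW bar fus (l ++ [c]) [e, bar α] =
      {l ++ [c] ++ [e, bar α], l ++ [c] ++ [bar α]} := by
  ext z
  constructor
  · rintro ⟨u, t, v, h1, h2, h3⟩
    have hlen : 2 = t.length + v.length := by
      have := congrArg List.length h2
      simpa [conjW] using this
    rcases t with _ | ⟨a, _ | ⟨b, _ | ⟨d, t⟩⟩⟩
    · simp only [List.append_nil] at h1
      subst h1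
      simp only [conjW, List.map_nil, List.reverse_nil, List.nil_append] at h2
      subst h2
      rcases h3 with rfl | ⟨a, b, ha, hb, γ, hγ, rfl⟩
      · left; rfl
      · rw [List.getLast?_concat] at ha
        simp only [Option.some.injEq] at ha
        subst ha
        simp only [List.head?, Option.some.injEq] at hb
        subst hb
        rw [hfus_right] at hγ
        simp only [Set.mem_singleton_iff] at hγ
        subst hγ
        right
        simp [List.dropLast_concat]
    · simp only [conjW, List.map_cons, List.map_nil, List.reverse_cons,
        List.reverse_nil, List.nil_append, List.cons_append,
        List.cons.injEq] at h2
      obtain ⟨hae, -⟩ := h2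
      have : a = e := by rw [← hbar a, ← hae, hbare]
      subst this
      have := congrArg List.getLast? h1
      rw [List.getLast?_concat, List.getLast?_concat] at this
      exact absurd (Option.some.inj this) hc
    · have hv : v = [] := by
        cases v with
        | nil => rfl
        | cons w v => simp at hlen
      subst hv
      simp only [conjW, List.map_cons, List.map_nil, List.reverse_cons,
        List.reverse_nil, List.nil_append, List.append_nil, List.cons_append,
        List.cons.injEq] at h2
      obtain ⟨hbe, -⟩ := h2
      have hbee : b = e := by rw [← hbar b, ← hbe, hbare]
      rw [hbee] at h1
      have h1' : l ++ [c] = (u ++ [a]) ++ [e] := by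
        rw [h1]; simp
      have := congrArg List.getLast? h1'
      rw [List.getLast?_concat, List.getLast?_concat] at this
      exact absurd (Option.some.inj this) hc
    · simp at hlen; omega
  · rintro (rfl | rfl)
    · exact ⟨l ++ [c], [], [e, bar α], by simp, by simp [conjW], Or.inl rfl⟩
    · refine ⟨l ++ [c], [], [e, bar α], by simp, by simp [conjW],
        Or.inr ⟨c, e, by rw [List.getLast?_concat], rfl, c, ?_,
          by simp [List.dropLast_concat]⟩⟩
      rw [hfus_right]; rfl

theorem stmt11 (bar : I → I) (e : I) (fus : I → I → Set I)
    (hbar : ∀ a : I, bar (bar a) = a) (hbare : bar e = e)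
    (hfus_left : ∀ β : I, fus e β = {β}) (hfus_right : ∀ β : I, fus β e = {β})
    (α : I) (hα : α ≠ e) (y : List I) (hy : y ∈ G₂ e) :
    fusSet bar fus (fusSet bar fus {[α, e]} {y}) {[e, bar α]} =
        {(α :: e :: y) ++ [e, bar α], (α :: e :: y) ++ [bar α],
          (α :: y) ++ [e, bar α], (α :: y) ++ [bar α]} ∧
      fusSet bar fus (fusSet bar fus {[α, e]} {y}) {[e, bar α]} ⊆ G₂ e := by
  obtain ⟨hy0, hyh, hyl⟩ := hy
  obtain ⟨yh, yt, rfl⟩ := List.exists_cons_of_ne_nil hy0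
  have hyh' : yh ≠ e := fun h => hyh (by simp [h])
  obtain ⟨l, c, hlc⟩ : ∃ l c, yh :: yt = l ++ [c] := by
    rcases List.eq_nil_or_concat (yh :: yt) with h | ⟨l, c, h⟩
    · simp at h
    · exact ⟨l, c, by simpa using h⟩
  have hc : c ≠ e := by
    intro h
    apply hyl
    rw [hlc, List.getLast?_concat, h]
  have hbarα : bar α ≠ e := by
    intro h
    apply hα
    rw [← hbar α, h, hbare]
  have step1 : fusSet bar fus {[α, e]} {yh :: yt} =
      {α :: e :: yh :: yt, α :: yh :: yt} := by
    have : fusSet bar fus {[α, e]} {yh :: yt} = fusW bar fus [α, e] (yh :: yt) := by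
      ext z; simp [fusSet]
    rw [this, helper_fusW1 bar e fus hbar hbare hfus_left α yh yt hyh']
  have step2 : fusSet bar fus {α :: e :: yh :: yt, α :: yh :: yt} {[e, bar α]} =
      fusW bar fus (α :: e :: yh :: yt) [e, bar α] ∪
        fusW bar fus (α :: yh :: yt) [e, bar α] := by
    ext z
    constructor
    · rintro ⟨x, hx, w, hw, hz⟩
      simp only [Set.mem_singleton_iff] at hw
      subst hw
      rcases hx with rfl | hx
      · exact Or.inl hz
      · simp only [Set.mem_singleton_iff] at hx
        subst hx
        exact Or.inr hz
    · rintro (hz | hz)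
      · exact ⟨_, Or.inl rfl, _, rfl, hz⟩
      · exact ⟨_, Or.inr rfl, _, rfl, hz⟩
  have e1 : α :: e :: yh :: yt = (α :: e :: l) ++ [c] := by
    rw [hlc]; simp
  have e2 : α :: yh :: yt = (α :: l) ++ [c] := by
    rw [hlc]; simp
  have key : fusSet bar fus (fusSet bar fus {[α, e]} {yh :: yt}) {[e, bar α]} =
      {(α :: e :: yh :: yt) ++ [e, bar α], (α :: e :: yh :: yt) ++ [bar α],
        (α :: yh :: yt) ++ [e, bar α], (α :: yh :: yt) ++ [bar α]} := by
    rw [step1, step2, e1, e2,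
      helper_fusW2 bar e fus hbar hbare hfus_right α (α :: e :: l) c hc,
      helper_fusW2 bar e fus hbar hbare hfus_right α (α :: l) c hc]
    ext z
    simp only [Set.mem_union, Set.mem_insert_iff, Set.mem_singleton_iff,
      List.append_assoc, List.cons_append, List.nil_append]
    tauto
  refine ⟨key, ?_⟩
  rw [key]
  rintro z (rfl | rfl | rfl | rfl) <;>
    refine ⟨by simp, by simpa using hα, ?_⟩
  · rw [show (α :: e :: yh :: yt) ++ [e, bar α] =
        ((α :: e :: yh :: yt) ++ [e]) ++ [bar α] by simp,
      List.getLast?_concat]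
    simpa using hbarα
  · rw [List.getLast?_concat]
    simpa using hbarα
  · rw [show (α :: yh :: yt) ++ [e, bar α] =
        ((α :: yh :: yt) ++ [e]) ++ [bar α] by simp,
      List.getLast?_concat]
    simpa using hbarα
  · rw [List.getLast?_concat]
    simpa using hbarα
end

section
/- Let α ∈ I with α ≠ e and let t ∈ E₃; write w = t.tail (which is nonempty) and β = t.getLast. Then ({[α]} ∘ {t}) ∘ {[bar α]} = {(α :: t) ++ [bar α], (α :: w) ++ [bar α]} ∪ {(α :: t.dropLast) ++ [γ] | γ ∈ fus β (bar α)} ∪ {(α :: w.dropLast) ++ [γ] | γ ∈ fus β (bar α)} ∪ T, where T = {α :: t.dropLast, α :: w.dropLast} if β = α and T = ∅ otherwise. (This is the displayed decomposition of ω(α) ⊗ ω(t) ⊗ ω(ᾱ), with its δ_{β_l, α} terms, in the proof of Lemma 3.4(1) of the paper.) -/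
/- Combinatorial model of the Lemeux–Tarrago fusion rules for a free wreath
product 𝔾 ≀* S_N⁺. Words over `I` (a type modeling `Irr 𝔾`) label the
irreducible corepresentations. -/

variable {I : Type*}

section Aux
variable {I : Type*}

lemma lemA (bar : I → I) (fus : I → I → Set I) (e α : I)
    (hfr : fus α e = {α}) (hne : bar α ≠ e)
    (t : List I) (hth : t.head? = some e) :
    fusW bar fus [α] t = {α :: t, α :: t.tail} := by
  ext z
  constructor
  · rintro ⟨u, s, v, hx, hy, h⟩
    rcases u with _ | ⟨a, u⟩
    · simp only [List.nil_append] at hx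
      subst hx
      rw [hy] at hth
      simp [conjW] at hth
      exact (hne hth).elim
    · simp at hx
      obtain ⟨rfl, rfl, rfl⟩ := hx
      simp only [conjW, List.map_nil, List.reverse_nil, List.nil_append] at hy
      subst hy
      rcases h with rfl | ⟨a', b, ha', hb, γ, hγ, rfl⟩
      · left; rfl
      · simp at ha'
        subst ha'
        rw [hth] at hb
        injection hb with hb; subst hb
        rw [hfr] at hγ
        rw [hγ]
        right; rfl
  · rintro (rfl | rfl)
    · exact ⟨[α], [], t, by simp, by simp [conjW], Or.inl rfl⟩
    · refine ⟨[α], [], t, by simp, by simp [conjW], Or.inr ⟨α, e, by simp, hth, α, by simp [hfr], by simp⟩⟩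

lemma lemB (bar : I → I) (fus : I → I → Set I) (c β : I)
    (x : List I) (hx : x ≠ []) (hβ : x.getLast? = some β) :
    fusW bar fus x [c] =
      {x ++ [c]} ∪ {z | ∃ γ ∈ fus β c, z = x.dropLast ++ [γ]} ∪
      {z | bar β = c ∧ z = x.dropLast} := by
  ext z
  constructor
  · rintro ⟨u, s, v, hxe, hy, h⟩
    rcases s with _ | ⟨d, s⟩
    · simp only [conjW, List.map_nil, List.reverse_nil, List.nil_append] at hy
      subst hy
      simp only [List.append_nil] at hxe
      subst hxe
      rcases h with rfl | ⟨a, b, ha, hb, γ, hγ, rfl⟩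
      · exact Or.inl (Or.inl rfl)
      · rw [hβ] at ha; injection ha with ha; subst ha
        simp at hb; subst hb
        exact Or.inl (Or.inr ⟨γ, hγ, by simp⟩)
    · have hlen := congrArg List.length hy
      simp [conjW] at hlen
      have hs : s = [] := List.length_eq_zero_iff.mp (by omega)
      have hv : v = [] := List.length_eq_zero_iff.mp (by omega)
      subst hs; subst hv
      simp only [conjW, List.map_cons, List.map_nil, List.reverse_cons, List.reverse_nil,
        List.nil_append, List.append_nil] at hy
      injection hy with hc
      subst hxe
      have hd : d = β := by
        rw [List.getLast?_append] at hβ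
        simp at hβ
        exact hβ
      subst hd
      rcases h with rfl | ⟨a, b, _, hb, _⟩
      · right
        refine ⟨hc.symm, ?_⟩
        simp
      · simp at hb
  · rintro ((rfl | ⟨γ, hγ, rfl⟩) | ⟨hc, rfl⟩)
    · exact ⟨x, [], [c], by simp, by simp [conjW], Or.inl rfl⟩
    · exact ⟨x, [], [c], by simp, by simp [conjW],
        Or.inr ⟨β, c, hβ, rfl, γ, hγ, by simp⟩⟩
    · refine ⟨x.dropLast, [β], [], (List.dropLast_append_getLast? β hβ).symm,
        by simp [conjW, hc], Or.inl (by simp)⟩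

lemma fusSet_singleton_singleton (bar : I → I) (fus : I → I → Set I) (x y : List I) :
    fusSet bar fus {x} {y} = fusW bar fus x y := by
  ext z; simp [fusSet]

lemma fusSet_pair_singleton (bar : I → I) (fus : I → I → Set I) (x₁ x₂ y : List I) :
    fusSet bar fus {x₁, x₂} {y} = fusW bar fus x₁ y ∪ fusW bar fus x₂ y := by
  ext z
  simp only [fusSet, Set.mem_setOf_eq, Set.mem_insert_iff, Set.mem_singleton_iff,
    Set.mem_union]
  constructor
  · rintro ⟨x, (rfl | rfl), y', rfl, hz⟩
    · exact Or.inl hz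
    · exact Or.inr hz
  · rintro (hz | hz)
    · exact ⟨x₁, Or.inl rfl, y, rfl, hz⟩
    · exact ⟨x₂, Or.inr rfl, y, rfl, hz⟩

end Aux

set_option maxHeartbeats 1000000 in
theorem stmt12 (bar : I → I) (e : I) (fus : I → I → Set I)
    (hbar : ∀ a : I, bar (bar a) = a) (hbare : bar e = e)
    (hfus_left : ∀ β : I, fus e β = {β}) (hfus_right : ∀ β : I, fus β e = {β})
    (α : I) (hα : α ≠ e) (t : List I) (ht : t ∈ E₃ e)
    (β : I) (hβ : t.getLast? = some β) :
    fusSet bar fus (fusSet bar fus {[α]} {t}) {[bar α]} =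
      {(α :: t) ++ [bar α], (α :: t.tail) ++ [bar α]} ∪
        {z : List I | ∃ γ ∈ fus β (bar α), z = (α :: t.dropLast) ++ [γ]} ∪
        {z : List I | ∃ γ ∈ fus β (bar α), z = (α :: t.tail.dropLast) ++ [γ]} ∪
        {z : List I | β = α ∧ (z = α :: t.dropLast ∨ z = α :: t.tail.dropLast)} := by
  -- basic facts
  obtain ⟨ht1, ht2⟩ := ht
  have htne : t ≠ [] := by rintro rfl; exact ht2 ⟨0, rfl⟩
  have hth : t.head? = some e := ht1.resolve_left htne
  obtain ⟨w, rfl⟩ : ∃ w, t = e :: w := by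
    rcases t with _ | ⟨a, w⟩
    · exact absurd rfl htne
    · simp at hth; exact ⟨w, by rw [hth]⟩
  have hwne : w ≠ [] := by rintro rfl; exact ht2 ⟨1, rfl⟩
  have hbarα : bar α ≠ e := fun h => hα (by rw [← hbar α, h, hbare])
  have hβw : w.getLast? = some β := by
    rcases w with _ | ⟨b, w⟩; · exact absurd rfl hwne
    · simpa using hβ
  have hβt : (α :: e :: w).getLast? = some β := by
    rw [List.getLast?_cons, hβ]; rfl
  have hβw' : (α :: w).getLast? = some β := by
    rw [List.getLast?_cons, hβw]; rfl
  have hdt : (α :: e :: w).dropLast = α :: (e :: w).dropLast :=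
    List.dropLast_cons_of_ne_nil (by simp)
  have hdw : (α :: w).dropLast = α :: w.dropLast :=
    List.dropLast_cons_of_ne_nil hwne
  have hcc : (bar β = bar α) = (β = α) := by
    apply propext
    constructor
    · intro h; rw [← hbar β, h, hbar]
    · intro h; rw [h]
  rw [fusSet_singleton_singleton,
    lemA bar fus e α (hfus_right α) hbarα _ hth,
    fusSet_pair_singleton]
  simp only [List.tail_cons]
  rw [lemB bar fus (bar α) β _ (by simp) hβt,
    lemB bar fus (bar α) β _ (by simp) hβw',
    hdt, hdw]
  have hCD : ({z | bar β = bar α ∧ z = α :: (e :: w).dropLast} ∪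
      {z | bar β = bar α ∧ z = α :: w.dropLast}) =
      {z : List I | β = α ∧ (z = α :: (e :: w).dropLast ∨ z = α :: w.dropLast)} := by
    ext z
    simp only [Set.mem_union, Set.mem_setOf_eq, hcc]
    tauto
  rw [← hCD, Set.insert_eq]
  simp only [List.cons_append]
  ac_rfl
end
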